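/- arXiv:2605.02827 — 4 statements merged into one kernel-verified Lean document; each statement's English description precedes it below -/
import Mathlib

section
/- Let N ∼ Binomial(m, p) with m ≥ 1 and p ∈ (0,1]. Then there exists a universal constant C > 0 (independent of m and p) such that E[ ((N − mp)² / N) · 1{N > 0} ] ≤ C. -/
open Finset

/-- The binomial probability mass function: P(N = k) for N ∼ Binomial(m, p). -/
noncomputable def binomPMF (m : ℕ) (p : ℝ) (k : ℕ) : ℝ :=
  (m.choose k : ℝ) * p ^ k * (1 - p) ^ (m - k)

lemma pmf_nonneg (m : ℕ) (p : ℝ) (k : ℕ) (hp : 0 < p) (hp1 : p ≤ 1) :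
    0 ≤ binomPMF m p k := by
  unfold binomPMF
  have : (0:ℝ) ≤ 1 - p := by linarith
  positivity

lemma sum_pmf_eq_one (m : ℕ) (p : ℝ) :
    ∑ k ∈ range (m + 1), binomPMF m p k = 1 := by
  have h := add_pow p (1 - p) m
  simp only [add_sub_cancel, one_pow] at h
  rw [h]
  exact Finset.sum_congr rfl (fun k _ => by unfold binomPMF; ring)

lemma sum_k_pmf (m : ℕ) (p : ℝ) (hm : 1 ≤ m) :
    ∑ k ∈ range (m + 1), (k : ℝ) * binomPMF m p k = m * p := by
  rw [Finset.sum_range_succ']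
  simp only [Nat.cast_zero, zero_mul, add_zero]
  obtain ⟨n, rfl⟩ : ∃ n, m = n + 1 := ⟨m - 1, (Nat.succ_pred_eq_of_pos hm).symm⟩
  have step : ∀ j ∈ range (n + 1), ((j+1:ℕ) : ℝ) * binomPMF (n+1) p (j+1)
      = ((n:ℝ)+1) * p * binomPMF n p j := by
    intro j hj
    have hc : ((n:ℝ)+1) * (n.choose j) = ((n+1).choose (j+1)) * ((j:ℝ)+1) := by
      exact_mod_cast congrArg (Nat.cast : ℕ → ℝ) (Nat.add_one_mul_choose_eq n j)
    unfold binomPMF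
    have hsub : n + 1 - (j + 1) = n - j := by omega
    rw [hsub, pow_succ]
    push_cast
    linear_combination (-(p ^ j * p * (1 - p) ^ (n - j))) * hc
  rw [Finset.sum_congr rfl step, ← Finset.mul_sum, sum_pmf_eq_one]
  push_cast; ring

lemma pmf_shift1 (m : ℕ) (p : ℝ) (hp : 0 < p) (k : ℕ) :
    binomPMF m p k / ((k:ℝ)+1) = binomPMF (m+1) p (k+1) / (((m:ℝ)+1) * p) := by
  have hc : ((m:ℝ)+1) * (m.choose k) = ((m+1).choose (k+1)) * ((k:ℝ)+1) := by
    exact_mod_cast congrArg (Nat.cast : ℕ → ℝ) (Nat.add_one_mul_choose_eq m k)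
  unfold binomPMF
  have hsub : m + 1 - (k + 1) = m - k := by omega
  rw [hsub, pow_succ]
  have hk1 : (0:ℝ) < (k:ℝ)+1 := by positivity
  have hm1 : (0:ℝ) < ((m:ℝ)+1) * p := by positivity
  rw [div_eq_div_iff hk1.ne' hm1.ne']
  push_cast
  linear_combination (p ^ k * p * (1 - p) ^ (m - k)) * hc

lemma sum_inv1 (m : ℕ) (p : ℝ) (hp : 0 < p) (hp1 : p ≤ 1) :
    ∑ k ∈ range (m + 1), binomPMF m p k / ((k:ℝ)+1) ≤ 1 / (((m:ℝ)+1) * p) := by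
  have h1 : ∑ k ∈ range (m + 1), binomPMF m p k / ((k:ℝ)+1)
      = (∑ k ∈ range (m + 1), binomPMF (m+1) p (k+1)) / (((m:ℝ)+1) * p) := by
    rw [Finset.sum_div]
    exact Finset.sum_congr rfl (fun k _ => pmf_shift1 m p hp k)
  rw [h1]
  have h2 : ∑ k ∈ range (m + 1), binomPMF (m+1) p (k+1) ≤ 1 := by
    have hs := Finset.sum_range_succ' (binomPMF (m+1) p) (m+1)
    have h0 := pmf_nonneg (m+1) p 0 hp hp1
    have he := sum_pmf_eq_one (m+1) p
    linarith
  have hpos : (0:ℝ) < ((m:ℝ)+1) * p := by positivity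
  gcongr

lemma pmf_shift2 (m : ℕ) (p : ℝ) (hp : 0 < p) (k : ℕ) :
    binomPMF m p k / (((k:ℝ)+1) * ((k:ℝ)+2))
      = binomPMF (m+2) p (k+2) / ((((m:ℝ)+1) * ((m:ℝ)+2)) * p^2) := by
  have h1 : ((m:ℝ)+1) * (m.choose k) = ((m+1).choose (k+1)) * ((k:ℝ)+1) := by
    exact_mod_cast congrArg (Nat.cast : ℕ → ℝ) (Nat.add_one_mul_choose_eq m k)
  have h2 : ((m:ℝ)+2) * ((m+1).choose (k+1)) = ((m+2).choose (k+2)) * ((k:ℝ)+2) := by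
    exact_mod_cast congrArg (Nat.cast : ℕ → ℝ) (Nat.add_one_mul_choose_eq (m+1) (k+1))
  unfold binomPMF
  have hsub : m + 2 - (k + 2) = m - k := by omega
  rw [hsub, pow_add]
  have hk1 : (0:ℝ) < ((k:ℝ)+1) * ((k:ℝ)+2) := by positivity
  have hm1 : (0:ℝ) < (((m:ℝ)+1) * ((m:ℝ)+2)) * p^2 := by positivity
  rw [div_eq_div_iff hk1.ne' hm1.ne']
  push_cast
  linear_combination (p ^ k * p ^ 2 * (1 - p) ^ (m - k)) *
    ((((m:ℝ)+2)) * h1 + (((k:ℝ)+1)) * h2)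

lemma sum_inv2 (m : ℕ) (p : ℝ) (hp : 0 < p) (hp1 : p ≤ 1) :
    ∑ k ∈ range (m + 1), binomPMF m p k / (((k:ℝ)+1) * ((k:ℝ)+2))
      ≤ 1 / ((((m:ℝ)+1) * ((m:ℝ)+2)) * p^2) := by
  have h1 : ∑ k ∈ range (m + 1), binomPMF m p k / (((k:ℝ)+1) * ((k:ℝ)+2))
      = (∑ k ∈ range (m + 1), binomPMF (m+2) p (k+2)) / ((((m:ℝ)+1) * ((m:ℝ)+2)) * p^2) := by
    rw [Finset.sum_div]
    exact Finset.sum_congr rfl (fun k _ => pmf_shift2 m p hp k)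
  rw [h1]
  have h2 : ∑ k ∈ range (m + 1), binomPMF (m+2) p (k+2) ≤ 1 := by
    have ha := Finset.sum_range_succ' (binomPMF (m+2) p) (m+2)
    have hb := Finset.sum_range_succ' (fun k => binomPMF (m+2) p (k+1)) (m+1)
    have h0 := pmf_nonneg (m+2) p 0 hp hp1
    have h1' := pmf_nonneg (m+2) p 1 hp hp1
    have he := sum_pmf_eq_one (m+2) p
    linarith
  have hpos : (0:ℝ) < (((m:ℝ)+1) * ((m:ℝ)+2)) * p^2 := by positivity
  gcongr

lemma mp_pow_le_one (m : ℕ) (p : ℝ) (hp : 0 < p) (hp1 : p ≤ 1) :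
    (m:ℝ) * p * (1 - p) ^ m ≤ 1 := by
  have hb : 1 + (m:ℝ) * p ≤ (1 + p) ^ m := one_add_mul_le_pow (by linarith) m
  have hq0 : (0:ℝ) ≤ (1 - p) ^ m := by
    have : (0:ℝ) ≤ 1 - p := by linarith
    positivity
  have hqq : (1 - p) ^ m * (1 + p) ^ m = (1 - p^2) ^ m := by
    rw [← mul_pow]; ring_nf
  have hle1 : (1 - p^2) ^ m ≤ 1 := by
    apply pow_le_one₀ <;> nlinarith
  nlinarith [mul_le_mul_of_nonneg_left hb hq0]

/-- uniform bound on E[((N − mp)²/N)·1{N>0}] for N ∼ Binomial(m,p). -/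
theorem binomial_inverse_moment_bound :
    ∃ C : ℝ, 0 < C ∧ ∀ (m : ℕ) (p : ℝ), 1 ≤ m → 0 < p → p ≤ 1 →
      ∑ k ∈ Finset.range (m + 1),
        binomPMF m p k * (if k = 0 then 0 else ((k : ℝ) - m * p) ^ 2 / (k : ℝ))
      ≤ C := by
  refine ⟨5, by norm_num, ?_⟩
  intro m p hm hp hp1
  set M : ℝ := (m : ℝ) * p with hM
  have hM0 : 0 ≤ M := by positivity
  have hterm : ∀ k ∈ range (m + 1),
      binomPMF m p k * (if k = 0 then 0 else ((k : ℝ) - M) ^ 2 / (k : ℝ))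
        ≤ (k : ℝ) * binomPMF m p k - 2 * M * binomPMF m p k
          + (if k = 0 then 2 * M * binomPMF m p k else 0)
          + M ^ 2 * (binomPMF m p k / ((k : ℝ) + 1))
          + 3 * M ^ 2 * (binomPMF m p k / (((k : ℝ) + 1) * ((k : ℝ) + 2))) := by
    intro k _
    have hpmf := pmf_nonneg m p k hp hp1
    by_cases hk : k = 0
    · subst hk
      norm_num
      have h1 : 0 ≤ M ^ 2 * (binomPMF m p 0 / ((0 : ℝ) + 1)) := by positivity
      have h2 : 0 ≤ 3 * M ^ 2 * (binomPMF m p 0 / (((0 : ℝ) + 1) * ((0 : ℝ) + 2))) := by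
        positivity
      linarith
    · have hk1 : (1 : ℝ) ≤ (k : ℝ) := by exact_mod_cast Nat.one_le_iff_ne_zero.mpr hk
      have hkpos : (0 : ℝ) < (k : ℝ) := by linarith
      simp only [if_neg hk]
      have key : ((k : ℝ) - M) ^ 2 / (k : ℝ)
          ≤ (k : ℝ) - 2 * M + M ^ 2 * (1 / ((k : ℝ) + 1))
            + 3 * M ^ 2 * (1 / (((k : ℝ) + 1) * ((k : ℝ) + 2))) := by
        have hdiff : ((k : ℝ) - 2 * M + M ^ 2 * (1 / ((k : ℝ) + 1))
              + 3 * M ^ 2 * (1 / (((k : ℝ) + 1) * ((k : ℝ) + 2))))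
            - ((k : ℝ) - M) ^ 2 / (k : ℝ)
            = 2 * M ^ 2 * ((k : ℝ) - 1) / ((k : ℝ) * ((k : ℝ) + 1) * ((k : ℝ) + 2)) := by
          field_simp
          ring
        have hnum : 0 ≤ 2 * M ^ 2 * ((k : ℝ) - 1) := by nlinarith [sq_nonneg M]
        have hden : 0 < (k : ℝ) * ((k : ℝ) + 1) * ((k : ℝ) + 2) := by positivity
        nlinarith [div_nonneg hnum hden.le, hdiff]
      calc binomPMF m p k * (((k : ℝ) - M) ^ 2 / (k : ℝ))
          ≤ binomPMF m p k * ((k : ℝ) - 2 * M + M ^ 2 * (1 / ((k : ℝ) + 1))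
              + 3 * M ^ 2 * (1 / (((k : ℝ) + 1) * ((k : ℝ) + 2)))) :=
            mul_le_mul_of_nonneg_left key hpmf
        _ = (k : ℝ) * binomPMF m p k - 2 * M * binomPMF m p k + 0
              + M ^ 2 * (binomPMF m p k / ((k : ℝ) + 1))
              + 3 * M ^ 2 * (binomPMF m p k / (((k : ℝ) + 1) * ((k : ℝ) + 2))) := by ring
  have hsplit : ∑ k ∈ range (m + 1),
        ((k : ℝ) * binomPMF m p k - 2 * M * binomPMF m p k
          + (if k = 0 then 2 * M * binomPMF m p k else 0)
          + M ^ 2 * (binomPMF m p k / ((k : ℝ) + 1))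
          + 3 * M ^ 2 * (binomPMF m p k / (((k : ℝ) + 1) * ((k : ℝ) + 2))))
      = (∑ k ∈ range (m + 1), (k : ℝ) * binomPMF m p k)
        - 2 * M * (∑ k ∈ range (m + 1), binomPMF m p k)
        + 2 * M * binomPMF m p 0
        + M ^ 2 * (∑ k ∈ range (m + 1), binomPMF m p k / ((k : ℝ) + 1))
        + 3 * M ^ 2 * (∑ k ∈ range (m + 1), binomPMF m p k / (((k : ℝ) + 1) * ((k : ℝ) + 2))) := by
    simp only [Finset.sum_add_distrib, Finset.sum_sub_distrib, ← Finset.mul_sum]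
    congr 2
    rw [Finset.sum_ite_eq' (range (m + 1)) 0 (fun k => 2 * M * binomPMF m p k)]
    simp
  have Sk := sum_k_pmf m p hm
  have Sp := sum_pmf_eq_one m p
  have S1 := sum_inv1 m p hp hp1
  have S2 := sum_inv2 m p hp hp1
  have pmf0 : binomPMF m p 0 = (1 - p) ^ m := by simp [binomPMF]
  have hmp : M * (1 - p) ^ m ≤ 1 := mp_pow_le_one m p hp hp1
  have hA : M ^ 2 * (1 / (((m : ℝ) + 1) * p)) ≤ M := by
    rw [mul_one_div, div_le_iff₀ (by positivity)]
    nlinarith [Nat.cast_nonneg (α := ℝ) m]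
  have hB : 3 * M ^ 2 * (1 / ((((m : ℝ) + 1) * ((m : ℝ) + 2)) * p ^ 2)) ≤ 3 := by
    rw [mul_one_div, div_le_iff₀ (by positivity)]
    nlinarith [Nat.cast_nonneg (α := ℝ) m, sq_nonneg p]
  have hS1' : M ^ 2 * (∑ k ∈ range (m + 1), binomPMF m p k / ((k : ℝ) + 1))
      ≤ M ^ 2 * (1 / (((m : ℝ) + 1) * p)) :=
    mul_le_mul_of_nonneg_left S1 (sq_nonneg M)
  have hS2' : 3 * M ^ 2 * (∑ k ∈ range (m + 1), binomPMF m p k / (((k : ℝ) + 1) * ((k : ℝ) + 2)))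
      ≤ 3 * M ^ 2 * (1 / ((((m : ℝ) + 1) * ((m : ℝ) + 2)) * p ^ 2)) := by
    apply mul_le_mul_of_nonneg_left S2
    positivity
  calc ∑ k ∈ Finset.range (m + 1),
        binomPMF m p k * (if k = 0 then 0 else ((k : ℝ) - m * p) ^ 2 / (k : ℝ))
      ≤ ∑ k ∈ range (m + 1),
        ((k : ℝ) * binomPMF m p k - 2 * M * binomPMF m p k
          + (if k = 0 then 2 * M * binomPMF m p k else 0)
          + M ^ 2 * (binomPMF m p k / ((k : ℝ) + 1))
          + 3 * M ^ 2 * (binomPMF m p k / (((k : ℝ) + 1) * ((k : ℝ) + 2)))) :=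
        Finset.sum_le_sum hterm
    _ ≤ 5 := by rw [hsplit, Sk, Sp, pmf0]; linarith
end

section
/- Fix n ≥ 2 and for coalitions S with 1 ≤ |S| ≤ n−1 define the centered feature vector z(S) ∈ ℝ^n with coordinates z(S)_j = 1{j ∈ S} − |S|/n, and the Shapley kernel weight w(S) = (n−1) / ( C(n,|S|) · |S| · (n−|S|) ), where C(n,s) is the binomial coefficient. Then Σ_{S : 1 ≤ |S| ≤ n−1} w(S) · z(S) z(S)^T = ((n−1)/n) · (I_n − (1/n) 1 1^T), where I_n is the n×n identity and 1 is the all-ones vector. -/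
open Finset Matrix

/-- Centered inclusion feature vector z(S) ∈ ℝⁿ. -/
noncomputable def zFeat (n : ℕ) (S : Finset (Fin n)) : Fin n → ℝ :=
  fun j => (if j ∈ S then (1 : ℝ) else 0) - (S.card : ℝ) / n

/-- Shapley kernel weight w(S). -/
noncomputable def shapWeight (n : ℕ) (S : Finset (Fin n)) : ℝ :=
  ((n : ℝ) - 1) / ((n.choose S.card : ℝ) * (S.card : ℝ) * ((n : ℝ) - S.card))



lemma card_filter_subset_powersetCard {α : Type*} [DecidableEq α] (u T : Finset α) (hT : T ⊆ u)
    (s : ℕ) (hs : T.card ≤ s) :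
    ((u.powersetCard s).filter (fun S => T ⊆ S)).card = (u.card - T.card).choose (s - T.card) := by
  have h : ((u.powersetCard s).filter (fun S => T ⊆ S)).card
      = ((u \ T).powersetCard (s - T.card)).card := by
    apply Finset.card_nbij' (fun S => S \ T) (fun U => U ∪ T)
    · intro S hS
      simp only [Finset.mem_coe, mem_filter, Finset.mem_powersetCard] at hS
      obtain ⟨⟨hSu, hcard⟩, hTS⟩ := hS
      rw [Finset.mem_coe, Finset.mem_powersetCard]
      exact ⟨Finset.sdiff_subset_sdiff hSu le_rfl, by rw [Finset.card_sdiff_of_subset hTS, hcard]⟩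
    · intro U hU
      rw [Finset.mem_coe, Finset.mem_powersetCard] at hU
      obtain ⟨hUsub, hUcard⟩ := hU
      have hdisj : Disjoint U T := Finset.disjoint_of_subset_left hUsub Finset.sdiff_disjoint
      simp only [Finset.mem_coe, mem_filter, Finset.mem_powersetCard]
      refine ⟨⟨Finset.union_subset (hUsub.trans (Finset.sdiff_subset)) hT, ?_⟩,
        Finset.subset_union_right⟩
      rw [Finset.card_union_of_disjoint hdisj, hUcard, Nat.sub_add_cancel hs]
    · intro S hS
      simp only [Finset.mem_coe, mem_filter] at hS
      exact Finset.sdiff_union_of_subset hS.2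
    · intro U hU
      rw [Finset.mem_coe, Finset.mem_powersetCard] at hU
      exact Finset.union_sdiff_cancel_right
        (Finset.disjoint_of_subset_left hU.1 Finset.sdiff_disjoint)
  rw [h, Finset.card_powersetCard, Finset.card_sdiff_of_subset hT]

lemma nat_choose_id (n s : ℕ) (h : 1 ≤ s) :
    n * (n-1).choose (s-1) = s * n.choose s := by
  cases n with
  | zero =>
    cases s with
    | zero => omega
    | succ t => simp [Nat.choose_eq_zero_of_lt]
  | succ m =>
    cases s with
    | zero => omega
    | succ t => simpa [Nat.mul_comm] using Nat.add_one_mul_choose_eq m t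

set_option maxHeartbeats 1000000 in
lemma slice_sum (n : ℕ) (hn : 2 ≤ n) (s : ℕ) (hs1 : 1 ≤ s) (hs2 : s ≤ n - 1) (i j : Fin n) :
    ∑ S ∈ Finset.univ.powersetCard s,
      shapWeight n S * (zFeat n S i * zFeat n S j)
    = if i = j then ((n:ℝ)-1)/(n:ℝ)^2 else -1/(n:ℝ)^2 := by
  have hsn : s < n := by omega
  have hn0 : (0:ℝ) < n := by positivity
  have hC : (0:ℕ) < n.choose s := Nat.choose_pos hsn.le
  have hCne : ((n.choose s : ℕ) : ℝ) ≠ 0 := Nat.cast_ne_zero.mpr hC.ne'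
  have hsne : ((s:ℕ) : ℝ) ≠ 0 := Nat.cast_ne_zero.mpr (by omega)
  have hnne : (n:ℝ) ≠ 0 := hn0.ne'
  have hnsne : ((n:ℝ) - s) ≠ 0 := by
    have : (s:ℝ) < n := by exact_mod_cast hsn
    linarith
  have hn1 : ((n:ℝ) - 1) ≠ 0 := by
    have : (2:ℝ) ≤ n := by exact_mod_cast hn
    linarith
  have hNi : ∀ k : Fin n, ((Finset.univ.powersetCard s).filter (fun S => k ∈ S)).card
      = (n-1).choose (s-1) := by
    intro k
    have := card_filter_subset_powersetCard Finset.univ {k} (by simp) s (by simpa using hs1)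
    simpa [Finset.singleton_subset_iff, Finset.card_univ] using this
  have hw : ∀ S ∈ Finset.univ.powersetCard s, shapWeight n S
      = ((n : ℝ) - 1) / ((n.choose s : ℝ) * (s : ℝ) * ((n : ℝ) - s)) := by
    intro S hS
    rw [Finset.mem_powersetCard] at hS
    rw [shapWeight, hS.2]
  set w : ℝ := ((n : ℝ) - 1) / ((n.choose s : ℝ) * (s : ℝ) * ((n : ℝ) - s)) with hwdef
  set c : ℝ := (s:ℝ)/n with hcdef
  have key : ∀ S ∈ Finset.univ.powersetCard s,
      shapWeight n S * (zFeat n S i * zFeat n S j)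
      = w * ((if i ∈ S then (1:ℝ) else 0) * (if j ∈ S then (1:ℝ) else 0))
        - (w*c) * (if i ∈ S then (1:ℝ) else 0)
        - (w*c) * (if j ∈ S then (1:ℝ) else 0) + w * c^2 := by
    intro S hS
    rw [hw S hS, zFeat, zFeat]
    have hSc : (S.card : ℝ) = s := by
      rw [Finset.mem_powersetCard] at hS; exact_mod_cast hS.2
    rw [hSc]
    ring
  rw [Finset.sum_congr rfl key]
  rw [Finset.sum_add_distrib, Finset.sum_sub_distrib, Finset.sum_sub_distrib]
  rw [← Finset.mul_sum, ← Finset.mul_sum, ← Finset.mul_sum, Finset.sum_const,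
    Finset.card_powersetCard, Finset.card_univ, Fintype.card_fin, nsmul_eq_mul]
  have hsb : ∀ k : Fin n, (∑ S ∈ Finset.univ.powersetCard s, (if k ∈ S then (1:ℝ) else 0))
      = (((n-1).choose (s-1) : ℕ) : ℝ) := by
    intro k
    rw [Finset.sum_boole, hNi k]
  rw [hsb i, hsb j]
  have hprod : (∑ S ∈ Finset.univ.powersetCard s,
      ((if i ∈ S then (1:ℝ) else 0) * (if j ∈ S then (1:ℝ) else 0)))
      = (((Finset.univ.powersetCard s).filter (fun S => i ∈ S ∧ j ∈ S)).card : ℝ) := by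
    rw [← Finset.sum_boole]
    apply Finset.sum_congr rfl
    intro S _
    by_cases hi : i ∈ S <;> by_cases hj : j ∈ S <;> simp [hi, hj]
  rw [hprod]
  have id1 : (n:ℝ) * (((n-1).choose (s-1) : ℕ) : ℝ) = (s:ℝ) * ((n.choose s : ℕ) : ℝ) := by
    exact_mod_cast congrArg (Nat.cast : ℕ → ℝ) (nat_choose_id n s hs1)
  have hNival : (((n-1).choose (s-1) : ℕ) : ℝ) = (s:ℝ) * ((n.choose s:ℕ):ℝ) / n := by
    rw [eq_div_iff hnne]; linarith
  by_cases hij : i = j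
  · subst hij
    rw [if_pos rfl]
    have hAcard : ((Finset.univ.powersetCard s).filter (fun S => i ∈ S ∧ i ∈ S)).card
        = (n-1).choose (s-1) := by rw [← hNi i]; congr 1; ext S; simp
    rw [hAcard, hNival, hwdef, hcdef]
    field_simp
    ring
  · rw [if_neg hij]
    have hAval : (((Finset.univ.powersetCard s).filter
          (fun S => i ∈ S ∧ j ∈ S)).card : ℝ)
        = (s:ℝ) * ((s:ℝ) - 1) * ((n.choose s:ℕ):ℝ) / ((n:ℝ) * ((n:ℝ)-1)) := by
      rcases Nat.lt_or_ge s 2 with hs' | hs'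
      · -- s = 1
        have hseq : s = 1 := by omega
        subst hseq
        have hempty : ((Finset.univ.powersetCard 1).filter
            (fun S : Finset (Fin n) => i ∈ S ∧ j ∈ S)) = ∅ := by
          rw [Finset.filter_eq_empty_iff]
          intro S hS
          rw [Finset.mem_powersetCard] at hS
          rintro ⟨hi, hj⟩
          have hsub : ({i, j} : Finset (Fin n)) ⊆ S := by
            intro x hx
            simp only [Finset.mem_insert, Finset.mem_singleton] at hx
            rcases hx with rfl | rfl <;> assumption
          have := Finset.card_le_card hsub
          rw [Finset.card_insert_of_notMem (by simpa using hij), Finset.card_singleton,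
            hS.2] at this
          omega
        rw [hempty]
        simp
      · -- 2 ≤ s
        have hTcard : ({i, j} : Finset (Fin n)).card = 2 := by
          rw [Finset.card_insert_of_notMem (by simpa using hij), Finset.card_singleton]
        have hcount := card_filter_subset_powersetCard Finset.univ {i, j} (by simp) s
          (by omega : ({i, j} : Finset (Fin n)).card ≤ s)
        rw [hTcard, Finset.card_univ, Fintype.card_fin] at hcount
        have hfeq : ((Finset.univ.powersetCard s).filter
            (fun S : Finset (Fin n) => i ∈ S ∧ j ∈ S))
            = ((Finset.univ.powersetCard s).filter
            (fun S : Finset (Fin n) => ({i,j} : Finset (Fin n)) ⊆ S)) := by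
          apply Finset.filter_congr
          intro S _
          simp [Finset.insert_subset_iff]
        rw [hfeq, hcount]
        have id2 : ((n:ℕ)-1) * ((n-2).choose (s-2)) = (s-1) * ((n-1).choose (s-1)) := by
          have := nat_choose_id (n-1) (s-1) (by omega)
          have e1 : n - 1 - 1 = n - 2 := by omega
          have e2 : s - 1 - 1 = s - 2 := by omega
          rwa [e1, e2] at this
        have id2' : ((n:ℝ) - 1) * (((n-2).choose (s-2) : ℕ) : ℝ)
            = ((s:ℝ) - 1) * (((n-1).choose (s-1) : ℕ) : ℝ) := by
          have := congrArg (Nat.cast : ℕ → ℝ) id2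
          push_cast [Nat.cast_sub (by omega : 1 ≤ n), Nat.cast_sub (by omega : 1 ≤ s)] at this
          convert this using 2
        rw [eq_div_iff (by positivity : ((n:ℝ) * ((n:ℝ)-1)) ≠ 0)]
        nlinarith [id1, id2']
    rw [hAval, hNival, hwdef, hcdef]
    field_simp
    ring

/-- the KernelSHAP Gram matrix identity
Σ_S w(S) z(S)z(S)ᵀ = ((n−1)/n)(I − (1/n)11ᵀ). -/
theorem kernelshap_gram_identity (n : ℕ) (hn : 2 ≤ n) :
    ∑ S ∈ Finset.univ.filter
        (fun S : Finset (Fin n) => 1 ≤ S.card ∧ S.card ≤ n - 1),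
      shapWeight n S • Matrix.vecMulVec (zFeat n S) (zFeat n S)
    = (((n : ℝ) - 1) / n) •
        ((1 : Matrix (Fin n) (Fin n) ℝ)
          - ((n : ℝ)⁻¹) • Matrix.of (fun _ _ : Fin n => (1 : ℝ))) := by
  have hnne : (n:ℝ) ≠ 0 := by positivity
  ext i j
  simp only [Matrix.sum_apply, Matrix.smul_apply, Matrix.vecMulVec_apply, smul_eq_mul,
    Matrix.sub_apply, Matrix.one_apply, Matrix.of_apply]
  have hfilter : (Finset.univ.filter
        (fun S : Finset (Fin n) => 1 ≤ S.card ∧ S.card ≤ n - 1))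
      = (Finset.univ.filter
        (fun S : Finset (Fin n) => S.card ∈ Finset.Icc 1 (n-1))) := by
    apply Finset.filter_congr; intro S _; simp [Finset.mem_Icc]
  rw [hfilter, ← Finset.sum_fiberwise_eq_sum_filter Finset.univ (Finset.Icc 1 (n-1))
    (fun S : Finset (Fin n) => S.card)
    (fun S => shapWeight n S * (zFeat n S i * zFeat n S j))]
  have hfib : ∀ s ∈ Finset.Icc 1 (n-1),
      (∑ S ∈ Finset.univ.filter (fun S : Finset (Fin n) => S.card = s),
        shapWeight n S * (zFeat n S i * zFeat n S j))
      = if i = j then ((n:ℝ)-1)/(n:ℝ)^2 else -1/(n:ℝ)^2 := by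
    intro s hs
    rw [Finset.mem_Icc] at hs
    have hpc : (Finset.univ.filter (fun S : Finset (Fin n) => S.card = s))
        = Finset.univ.powersetCard s := by
      rw [Finset.powersetCard_eq_filter, Finset.powerset_univ]
    rw [hpc]
    exact slice_sum n hn s hs.1 hs.2 i j
  rw [Finset.sum_congr rfl hfib, Finset.sum_const, Nat.card_Icc]
  have hcard : (n - 1 + 1 - 1) = n - 1 := by omega
  rw [hcard, nsmul_eq_mul]
  have hcast : ((n - 1 : ℕ) : ℝ) = (n:ℝ) - 1 := by
    push_cast [Nat.cast_sub (by omega : 1 ≤ n)]; ring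
  rw [hcast]
  by_cases hij : i = j
  · rw [if_pos hij, if_pos hij]
    field_simp
  · rw [if_neg hij, if_neg hij]
    field_simp
    ring
end

section
/- Fix n ≥ 2 and define q(S) = 1/((n−1)·C(n,|S|)) for coalitions S with 1 ≤ |S| ≤ n−1. Then q is a probability mass function: Σ_{S : 1 ≤ |S| ≤ n−1} q(S) = 1. Moreover, with w and z as in the KernelSHAP design, the leverage ℓ(S) = (w(S)/q(S)) · z(S)^T G⁺ z(S) is constant and equals n−1 for all such S. -/
open Finset Matrix

/-- Pseudoinverse of the KernelSHAP Gram matrix: G⁺ = (n/(n−1))(I − (1/n)11ᵀ). -/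
noncomputable def Gplus (n : ℕ) : Matrix (Fin n) (Fin n) ℝ :=
  ((n : ℝ) / ((n : ℝ) - 1)) •
    ((1 : Matrix (Fin n) (Fin n) ℝ)
      - ((n : ℝ)⁻¹) • Matrix.of (fun _ _ : Fin n => (1 : ℝ)))

/-- The LeverageSHAP sampling law q(S) = 1/((n−1)·C(n,|S|)). -/
noncomputable def levQ (n : ℕ) (S : Finset (Fin n)) : ℝ :=
  1 / (((n : ℝ) - 1) * (n.choose S.card : ℝ))

/-- levQ is a probability mass function on coalitions with
1 ≤ |S| ≤ n−1, and the induced leverage score is constant equal to n−1. -/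
theorem leverageshap_law (n : ℕ) (hn : 2 ≤ n) :
    (∑ S ∈ Finset.univ.filter
        (fun S : Finset (Fin n) => 1 ≤ S.card ∧ S.card ≤ n - 1),
      levQ n S = 1) ∧
    (∀ S : Finset (Fin n), 1 ≤ S.card → S.card ≤ n - 1 →
      (shapWeight n S / levQ n S)
          * dotProduct (zFeat n S) (Gplus n *ᵥ zFeat n S)
        = (n : ℝ) - 1) := by
  have hn0 : (n : ℝ) ≠ 0 := by
    have : (0:ℝ) < n := by exact_mod_cast (by omega : 0 < n)
    linarith
  have hn2 : (2:ℝ) ≤ n := by exact_mod_cast hn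
  have hn1 : (n : ℝ) - 1 ≠ 0 := by linarith
  constructor
  · rw [← Finset.sum_fiberwise_of_maps_to (g := fun S : Finset (Fin n) => S.card)
      (t := Finset.Icc 1 (n-1)) (fun S hS => by
        simp only [Finset.mem_filter] at hS
        exact Finset.mem_Icc.mpr hS.2)]
    have hinner : ∀ k ∈ Finset.Icc 1 (n-1),
        ∑ S ∈ (Finset.univ.filter
          (fun S : Finset (Fin n) => 1 ≤ S.card ∧ S.card ≤ n - 1)).filter
          (fun S => S.card = k), levQ n S = 1 / ((n:ℝ) - 1) := by
      intro k hk
      rw [Finset.mem_Icc] at hk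
      have hset : (Finset.univ.filter
          (fun S : Finset (Fin n) => 1 ≤ S.card ∧ S.card ≤ n - 1)).filter
          (fun S => S.card = k) = Finset.univ.filter (fun S : Finset (Fin n) => S.card = k) := by
        ext S
        simp only [Finset.mem_filter, Finset.mem_univ, true_and]
        constructor
        · rintro ⟨_, h⟩; exact h
        · intro h; exact ⟨⟨by omega, by omega⟩, h⟩
      rw [hset]
      have hcard : (Finset.univ.filter (fun S : Finset (Fin n) => S.card = k)).card
          = n.choose k := by
        rw [← Finset.powerset_univ, ← Finset.powersetCard_eq_filter,
          Finset.card_powersetCard, Finset.card_univ, Fintype.card_fin]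
      have hCk : (n.choose k : ℝ) ≠ 0 :=
        Nat.cast_ne_zero.mpr (Nat.choose_pos (by omega)).ne'
      rw [Finset.sum_congr rfl (fun S hS => by
        simp only [Finset.mem_filter] at hS
        show levQ n S = 1 / (((n:ℝ) - 1) * (n.choose k : ℝ))
        rw [levQ, hS.2])]
      rw [Finset.sum_const, nsmul_eq_mul, hcard]
      field_simp
    rw [Finset.sum_congr rfl hinner]
    rw [Finset.sum_const, nsmul_eq_mul]
    rw [Nat.card_Icc]
    have : ((n - 1 + 1 - 1 : ℕ) : ℝ) = (n:ℝ) - 1 := by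
      have : (n - 1 + 1 - 1 : ℕ) = n - 1 := by omega
      rw [this, Nat.cast_sub (by omega)]; simp
    rw [this]
    field_simp
  · intro S h1 h2
    have hsum : ∑ j, zFeat n S j = 0 := by
      unfold zFeat
      rw [Finset.sum_sub_distrib]
      simp only [Finset.sum_ite_mem, Finset.univ_inter, Finset.sum_const, nsmul_eq_mul,
        mul_one, Finset.card_univ, Fintype.card_fin]
      field_simp
      ring
    have hmul : Gplus n *ᵥ zFeat n S = ((n:ℝ)/((n:ℝ)-1)) • zFeat n S := by
      unfold Gplus
      rw [smul_mulVec, sub_mulVec, one_mulVec, smul_mulVec]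
      have h0 : (Matrix.of fun _ _ : Fin n => (1:ℝ)) *ᵥ zFeat n S = 0 := by
        funext i
        simpa [mulVec, dotProduct] using hsum
      rw [h0, smul_zero, sub_zero]
    have hdot : dotProduct (zFeat n S) (zFeat n S)
        = (S.card : ℝ) - (S.card : ℝ)^2 / n := by
      unfold zFeat dotProduct
      have hterm : ∀ j : Fin n,
          ((if j ∈ S then (1:ℝ) else 0) - (S.card:ℝ)/n) *
          ((if j ∈ S then (1:ℝ) else 0) - (S.card:ℝ)/n)
          = (if j ∈ S then (1:ℝ) else 0) * (1 - 2*((S.card:ℝ)/n)) + ((S.card:ℝ)/n)^2 := by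
        intro j; by_cases h : j ∈ S <;> simp [h] <;> ring
      simp only [hterm]
      rw [Finset.sum_add_distrib, ← Finset.sum_mul]
      simp only [Finset.sum_ite_mem, Finset.univ_inter, Finset.sum_const, nsmul_eq_mul,
        mul_one, Finset.card_univ, Fintype.card_fin]
      field_simp
      ring
    rw [hmul, dotProduct_smul, smul_eq_mul, hdot]
    have hsn : S.card < n := by omega
    have hs0 : (S.card : ℝ) ≠ 0 := Nat.cast_ne_zero.mpr (by omega)
    have hsr : (S.card : ℝ) < n := by exact_mod_cast hsn
    have hns : (n:ℝ) - S.card ≠ 0 := by linarith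
    have hC : (n.choose S.card : ℝ) ≠ 0 :=
      Nat.cast_ne_zero.mpr (Nat.choose_pos (le_of_lt hsn)).ne'
    unfold shapWeight levQ
    field_simp
end

section
/- Complement-pair Rao–Blackwell optimality: Let q be a probability mass function on 2^[n] with q(S) + q(Sᶜ) > 0 whenever ρ(S) ≠ 0, and let r : 2^[n] → ℝ. Suppose (γ₁, γ₂) with γ₁, γ₂ : 2^[n] × 2^[n] → ℝ satisfies the feasibility constraint q(S)γ₁(S,Sᶜ) + q(Sᶜ)γ₂(Sᶜ,S) = ρ(S) for all S ⊆ [n]. Define the canonical weighting γ₁*(S,Sᶜ) = ρ(S)/(q(S)+q(Sᶜ)) and γ₂*(S,Sᶜ) = ρ(Sᶜ)/(q(S)+q(Sᶜ)). Then for S ∼ q, Var_q[γ₁*(S,Sᶜ)r(S) + γ₂*(S,Sᶜ)r(Sᶜ)] ≤ Var_q[γ₁(S,Sᶜ)r(S) + γ₂(S,Sᶜ)r(Sᶜ)]. -/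
/-!
Conditioning on the unordered pair `{S, Sᶜ}`, the canonical weighted sum `G` is the
`q`-weighted average of any feasible weighted sum `F` over the pair: feasibility at `S` and at
`Sᶜ` gives `q S * F S + q Sᶜ * F Sᶜ = ρ S * r S + ρ Sᶜ * r Sᶜ = (q S + q Sᶜ) * G S`.
Averaging over a pair preserves the mean and, by convexity of the square, can only lower the
second moment about that mean: the law of total variance for the pair partition.
-/

open Finset

/-- Expectation under a pmf on a finite type. -/
noncomputable def pexp {Ω : Type*} [Fintype Ω] (q : Ω → ℝ) (f : Ω → ℝ) : ℝ :=
  ∑ ω : Ω, q ω * f ω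

/-- Variance under a pmf on a finite type. -/
noncomputable def pvar {Ω : Type*} [Fintype Ω] (q : Ω → ℝ) (f : Ω → ℝ) : ℝ :=
  pexp q (fun ω => (f ω - pexp q f) ^ 2)

open Function

section PairAverage

variable {Ω : Type*} [Fintype Ω] {σ : Ω → Ω} {q F G : Ω → ℝ}

theorem add_mul_sq_le_of_add_mul_eq {a b g x y : ℝ} (ha : 0 ≤ a) (hb : 0 ≤ b)
    (h : (a + b) * g = a * x + b * y) :
    (a + b) * g ^ 2 ≤ a * x ^ 2 + b * y ^ 2 := by
  have h_gap : a * x ^ 2 + b * y ^ 2 - (a + b) * g ^ 2 = a * (x - g) ^ 2 + b * (y - g) ^ 2 := by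
    linear_combination (-2 * g) * h
  rw [← sub_nonneg, h_gap]
  positivity

theorem two_mul_pexp (hσ : Involutive σ) (q f : Ω → ℝ) :
    2 * pexp q f = ∑ ω, (q ω * f ω + q (σ ω) * f (σ ω)) := by
  rw [sum_add_distrib, Fintype.sum_bijective σ hσ.bijective _ (fun ω => q ω * f ω) fun _ => rfl,
    pexp, two_mul]

variable (hσ : Involutive σ) (hG : ∀ ω, G (σ ω) = G ω)
  (hpair : ∀ ω, (q ω + q (σ ω)) * G ω = q ω * F ω + q (σ ω) * F (σ ω))
include hσ hG hpair

theorem pexp_eq_of_pair_average : pexp q G = pexp q F := by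
  have h : 2 * pexp q G = 2 * pexp q F := by
    rw [two_mul_pexp hσ, two_mul_pexp hσ]
    refine sum_congr rfl fun ω _ => ?_
    rw [hG, ← hpair]
    ring
  linarith

theorem pexp_sq_le_of_pair_average (hq : ∀ ω, 0 ≤ q ω) :
    pexp q (fun ω => G ω ^ 2) ≤ pexp q (fun ω => F ω ^ 2) := by
  have h : 2 * pexp q (fun ω => G ω ^ 2) ≤ 2 * pexp q (fun ω => F ω ^ 2) := by
    rw [two_mul_pexp hσ, two_mul_pexp hσ]
    refine sum_le_sum fun ω _ => ?_
    rw [hG, ← add_mul]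
    exact add_mul_sq_le_of_add_mul_eq (hq ω) (hq (σ ω)) (hpair ω)
  linarith

theorem pvar_le_of_pair_average (hq : ∀ ω, 0 ≤ q ω) : pvar q G ≤ pvar q F := by
  set m := pexp q F
  have hpair_centered : ∀ ω, (q ω + q (σ ω)) * (G ω - m)
      = q ω * (F ω - m) + q (σ ω) * (F (σ ω) - m) := fun ω => by
    linear_combination hpair ω
  rw [pvar, pvar, pexp_eq_of_pair_average hσ hG hpair]
  exact pexp_sq_le_of_pair_average hσ (fun ω => by rw [hG]) hpair_centered hq

end PairAverage

theorem complement_pair_rao_blackwell_general (n : ℕ)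
    (q ρ r : Finset (Fin n) → ℝ)
    (hq0 : ∀ S, 0 ≤ q S)
    (γ₁ γ₂ : Finset (Fin n) → Finset (Fin n) → ℝ)
    (hfeas : ∀ S : Finset (Fin n), q S * γ₁ S Sᶜ + q Sᶜ * γ₂ Sᶜ S = ρ S)
    (γ₁s γ₂s : Finset (Fin n) → Finset (Fin n) → ℝ)
    (hγ₁s : ∀ S : Finset (Fin n), γ₁s S Sᶜ = ρ S / (q S + q Sᶜ))
    (hγ₂s : ∀ S : Finset (Fin n), γ₂s S Sᶜ = ρ Sᶜ / (q S + q Sᶜ)) :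
    pvar q (fun S => γ₁s S Sᶜ * r S + γ₂s S Sᶜ * r Sᶜ)
      ≤ pvar q (fun S => γ₁ S Sᶜ * r S + γ₂ S Sᶜ * r Sᶜ) := by
  set F := fun S => γ₁ S Sᶜ * r S + γ₂ S Sᶜ * r Sᶜ
  set G := fun S => γ₁s S Sᶜ * r S + γ₂s S Sᶜ * r Sᶜ
  have hpair_sum : ∀ S, q S * F S + q Sᶜ * F Sᶜ = ρ S * r S + ρ Sᶜ * r Sᶜ := fun S => by
    have hfeas_compl := hfeas Sᶜ
    rw [compl_compl] at hfeas_compl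
    simp only [F, compl_compl]
    linear_combination r S * hfeas S + r Sᶜ * hfeas_compl
  have hG : ∀ S, G S = (q S * F S + q Sᶜ * F Sᶜ) / (q S + q Sᶜ) := fun S => by
    simp only [G, hγ₁s, hγ₂s, hpair_sum]
    ring
  refine pvar_le_of_pair_average compl_involutive (fun S => ?_) (fun S => ?_) hq0
  · rw [hG, hG, compl_compl, add_comm (q Sᶜ), add_comm (q Sᶜ * _)]
  · -- if `q S + q Sᶜ = 0` then both weights vanish, so the pair sum is `0` too
    refine hG S ▸ mul_div_cancel_of_imp' fun h => ?_
    have hqS : q S = 0 := by linarith [hq0 S, hq0 Sᶜ]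
    have hqSc : q Sᶜ = 0 := by linarith [hq0 S, hq0 Sᶜ]
    simp [hqS, hqSc]

/-- Rao–Blackwell optimality of the canonical complement-pair weighting. -/
theorem complement_pair_rao_blackwell (n : ℕ)
    (q ρ r : Finset (Fin n) → ℝ)
    (hq0 : ∀ S, 0 ≤ q S) (hq1 : ∑ S : Finset (Fin n), q S = 1)
    (hsupp : ∀ S, ρ S ≠ 0 → 0 < q S + q Sᶜ)
    (γ₁ γ₂ : Finset (Fin n) → Finset (Fin n) → ℝ)
    (hfeas : ∀ S : Finset (Fin n), q S * γ₁ S Sᶜ + q Sᶜ * γ₂ Sᶜ S = ρ S)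
    (γ₁s γ₂s : Finset (Fin n) → Finset (Fin n) → ℝ)
    (hγ₁s : ∀ S : Finset (Fin n), γ₁s S Sᶜ = ρ S / (q S + q Sᶜ))
    (hγ₂s : ∀ S : Finset (Fin n), γ₂s S Sᶜ = ρ Sᶜ / (q S + q Sᶜ)) :
    pvar q (fun S => γ₁s S Sᶜ * r S + γ₂s S Sᶜ * r Sᶜ)
      ≤ pvar q (fun S => γ₁ S Sᶜ * r S + γ₂ S Sᶜ * r Sᶜ) :=
  complement_pair_rao_blackwell_general n q ρ r hq0 γ₁ γ₂ hfeas γ₁s γ₂s hγ₁s hγ₂s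
end
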